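/- Let τ be a nonempty finite type, n : ℕ, and r : List τ → ℝ. Suppose V : List τ → ℝ satisfies the local max constraint and the boundary condition for r. Let y be any list over τ of length n that is greedy for V, i.e., for every i < n the (i+1)-st token t of y satisfies V ((y.take i) ++ [t]) = max over t' : τ of V ((y.take i) ++ [t']). Then r y = max over all lists y' over τ of length n of r y'; that is, greedy token-by-token decoding with respect to V produces an optimal full sequence. -/

import Mathlib

/-- `V` satisfies the local max constraint: for every list `s` over `τ` with
`s.length < n`, `V s` equals the maximum over tokens `t : τ` of `V (s ++ [t])`. -/
def LocalMaxConstraint {τ : Type*} [Fintype τ] [Nonempty τ] (n : ℕ) (V : List τ → ℝ) : Prop :=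
  ∀ s : List τ, s.length < n →
    V s = Finset.univ.sup' Finset.univ_nonempty (fun t : τ => V (s ++ [t]))

/-- `V` satisfies the boundary condition for `r`: `V y = r y` for every
full sequence `y` (list of length `n`). -/
def BoundaryCondition {τ : Type*} (n : ℕ) (r V : List τ → ℝ) : Prop :=
  ∀ y : List τ, y.length = n → V y = r y

/-!
The local max constraint makes `V` non-increasing along every extension of a partial sequence,
so every full sequence has reward at most `V []`. Along a greedy sequence each step attains the
maximum, so `V` stays equal to `V []` all the way down, and the greedy sequence attains that bound.
-/

namespace LocalMaxConstraint

variable {τ : Type*} [Fintype τ] [Nonempty τ] {n : ℕ} {V : List τ → ℝ}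

theorem apply_append_singleton_le (hmax : LocalMaxConstraint n V) {s : List τ}
    (hs : s.length < n) (t : τ) : V (s ++ [t]) ≤ V s := by
  rw [hmax s hs]
  exact Finset.le_sup' (fun t' => V (s ++ [t'])) (Finset.mem_univ t)

theorem apply_le_nil (hmax : LocalMaxConstraint n V) (z : List τ) (hz : z.length ≤ n) :
    V z ≤ V [] := by
  induction z using List.reverseRecOn with
  | nil => exact le_rfl
  | append_singleton s t ih =>
    have hs : s.length < n := by
      rw [List.length_append, List.length_singleton] at hz; omega
    exact (hmax.apply_append_singleton_le hs t).trans (ih hs.le)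

theorem apply_eq_nil_of_greedy (hmax : LocalMaxConstraint n V) (y : List τ)
    (hy : y.length ≤ n)
    (hgreedy : ∀ (i : ℕ) (hi : i < y.length),
      V (y.take i ++ [y[i]]) =
        Finset.univ.sup' Finset.univ_nonempty (fun t => V (y.take i ++ [t]))) :
    V y = V [] := by
  have htake : ∀ i ≤ y.length, V (y.take i) = V [] := by
    intro i hi
    induction i with
    | zero => simp
    | succ k ih =>
      have hk : k < y.length := by omega
      rw [← List.take_concat_get' y k hk, hgreedy k hk,
        ← hmax (y.take k) (by rw [List.length_take]; omega), ih hk.le]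
  simpa using htake y.length le_rfl

end LocalMaxConstraint

theorem eq_sup'_ofFn_of_forall_le {τ : Type*} [Fintype τ] [Nonempty τ]
    (r : List τ → ℝ) (y : List τ)
    (hy : ∀ z : List τ, z.length = y.length → r z ≤ r y) :
    r y = Finset.univ.sup' Finset.univ_nonempty
      (fun y' : Fin y.length → τ => r (List.ofFn y')) := by
  refine le_antisymm ?_ (Finset.sup'_le _ _ fun y' _ => hy _ (List.length_ofFn))
  exact Finset.le_sup'_of_le _ (Finset.mem_univ y.get) (by rw [List.ofFn_get])

/-- If `V` satisfies the local max constraint and the boundary condition for `r`, and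
`y` is a full sequence of length `n` that is greedy for `V` — for every `i < n`, the
`(i+1)`-st token `t` of `y` satisfies
`V (y.take i ++ [t]) = max over t' : τ of V (y.take i ++ [t'])` — then `r y` is the
maximal reward over all full sequences of length `n`: greedy token-by-token decoding
with respect to `V` produces an optimal full sequence. -/
theorem greedy_decoding_is_optimal {τ : Type*} [Fintype τ] [Nonempty τ]
    (n : ℕ) (r V : List τ → ℝ)
    (hmax : LocalMaxConstraint n V) (hbd : BoundaryCondition n r V)
    (y : List τ) (hlen : y.length = n)
    (hgreedy : ∀ (i : ℕ) (hi : i < n),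
      V (y.take i ++ [y.get ⟨i, by omega⟩]) =
        Finset.univ.sup' Finset.univ_nonempty (fun t' : τ => V (y.take i ++ [t']))) :
    r y = Finset.univ.sup' Finset.univ_nonempty (fun y' : Fin n → τ => r (List.ofFn y')) := by
  subst hlen
  have hry : r y = V [] := by
    rw [← hbd y rfl, hmax.apply_eq_nil_of_greedy y le_rfl hgreedy]
  refine eq_sup'_ofFn_of_forall_le r y fun z hz => ?_
  rw [hry, ← hbd z hz]
  exact hmax.apply_le_nil z hz.le
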